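/- arXiv:0810.5507 — 3 statements merged into one kernel-verified Lean document; each statement's English description precedes it below -/
import Mathlib

section
/- For every real s ≥ 0 and all k, l ∈ ℤ² \ {0} with k + l ≠ 0 and k − l ≠ 0, the Lie bracket of the basis vector fields satisfies the structure-constant identity [A^s_k, A^s_l] = ([k,l]/(2|k|^{s+1}|l|^{s+1}))·(|k+l|^{s+1} B^s_{k+l} + |k−l|^{s+1} B^s_{k−l}), as an equality of vector fields on ℝ². -/
open Real

/-- Euclidean norm of a lattice point `k ∈ ℤ²`. -/
noncomputable def nZ (k : ℤ × ℤ) : ℝ := Real.sqrt ((k.1 : ℝ) ^ 2 + (k.2 : ℝ) ^ 2)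

/-- `k · θ`. -/
noncomputable def dotZ (k : ℤ × ℤ) (θ : ℝ × ℝ) : ℝ := (k.1 : ℝ) * θ.1 + (k.2 : ℝ) * θ.2

/-- The vector field `A^s_k(θ) = |k|^{-(s+1)} cos(k·θ)·(k₂, -k₁)` (zero for `k = 0`). -/
noncomputable def vfA (s : ℝ) (k : ℤ × ℤ) (θ : ℝ × ℝ) : ℝ × ℝ :=
  ((nZ k) ^ (-(s + 1)) * Real.cos (dotZ k θ)) • ((k.2 : ℝ), -(k.1 : ℝ))

/-- The vector field `B^s_k(θ) = |k|^{-(s+1)} sin(k·θ)·(k₂, -k₁)` (zero for `k = 0`). -/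
noncomputable def vfB (s : ℝ) (k : ℤ × ℤ) (θ : ℝ × ℝ) : ℝ × ℝ :=
  ((nZ k) ^ (-(s + 1)) * Real.sin (dotZ k θ)) • ((k.2 : ℝ), -(k.1 : ℝ))

/-- `[k,l] = k₁ l₂ - k₂ l₁`. -/
noncomputable def crossZ (k l : ℤ × ℤ) : ℝ := (k.1 : ℝ) * (l.2 : ℝ) - (k.2 : ℝ) * (l.1 : ℝ)

/-- Lie bracket of C¹ vector fields on `ℝ²`: `[X,Y](θ) = DY(θ)(X(θ)) - DX(θ)(Y(θ))`. -/
noncomputable def lieB (X Y : ℝ × ℝ → ℝ × ℝ) (θ : ℝ × ℝ) : ℝ × ℝ :=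
  fderiv ℝ Y θ (X θ) - fderiv ℝ X θ (Y θ)

/-! The fields `A^s_k` and `B^s_k` are plane waves `θ ↦ f(k·θ) k^⊥`. The derivative of such a wave
in direction `w` is `f'(k·θ) (k·w) k^⊥`, and `k·l^⊥ = [k,l] = -l·k^⊥`, so the bracket of two waves
is a combination of `k^⊥` and `l^⊥`; product-to-sum formulas for `sin x cos y` and `cos x sin y`
rewrite it in terms of `(k ± l)^⊥`. -/

noncomputable def perpZ (k : ℤ × ℤ) : ℝ × ℝ := ((k.2 : ℝ), -(k.1 : ℝ))

noncomputable def dotCLM (k : ℤ × ℤ) : ℝ × ℝ →L[ℝ] ℝ :=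
  (k.1 : ℝ) • ContinuousLinearMap.fst ℝ ℝ ℝ + (k.2 : ℝ) • ContinuousLinearMap.snd ℝ ℝ ℝ

noncomputable def planeWave (f : ℝ → ℝ) (k : ℤ × ℤ) (θ : ℝ × ℝ) : ℝ × ℝ :=
  f (dotZ k θ) • perpZ k

lemma dotZ_add (k l : ℤ × ℤ) (θ : ℝ × ℝ) : dotZ (k + l) θ = dotZ k θ + dotZ l θ := by
  simp only [dotZ, Prod.fst_add, Prod.snd_add, Int.cast_add]; ring

lemma dotZ_sub (k l : ℤ × ℤ) (θ : ℝ × ℝ) : dotZ (k - l) θ = dotZ k θ - dotZ l θ := by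
  simp only [dotZ, Prod.fst_sub, Prod.snd_sub, Int.cast_sub]; ring

lemma perpZ_add (k l : ℤ × ℤ) : perpZ (k + l) = perpZ k + perpZ l := by
  simp only [perpZ, Prod.fst_add, Prod.snd_add, Int.cast_add, Prod.mk_add_mk, neg_add]

lemma perpZ_sub (k l : ℤ × ℤ) : perpZ (k - l) = perpZ k - perpZ l := by
  simp only [perpZ, Prod.fst_sub, Prod.snd_sub, Int.cast_sub, Prod.mk_sub_mk, neg_sub_neg,
    neg_sub]

lemma dotZ_smul (k : ℤ × ℤ) (c : ℝ) (θ : ℝ × ℝ) : dotZ k (c • θ) = c * dotZ k θ :=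
  (dotCLM k).map_smul c θ

lemma dotZ_perpZ (k l : ℤ × ℤ) : dotZ k (perpZ l) = crossZ k l := by
  simp only [dotZ, perpZ, crossZ]; ring

lemma crossZ_comm (k l : ℤ × ℤ) : crossZ l k = -crossZ k l := by
  simp only [crossZ]; ring

lemma nZ_nonneg (k : ℤ × ℤ) : 0 ≤ nZ k := Real.sqrt_nonneg _

lemma nZ_pos {k : ℤ × ℤ} (hk : k ≠ 0) : 0 < nZ k := by
  refine Real.sqrt_pos.2 ?_
  have : (k.1 : ℝ) ≠ 0 ∨ (k.2 : ℝ) ≠ 0 := by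
    by_contra! h
    exact hk (Prod.ext (by exact_mod_cast h.1) (by exact_mod_cast h.2))
  rcases this with h | h <;> positivity

lemma vfA_eq_planeWave (s : ℝ) (k : ℤ × ℤ) :
    vfA s k = planeWave (fun t => nZ k ^ (-(s + 1)) * cos t) k := rfl

lemma nZ_rpow_smul_vfB (s : ℝ) (k : ℤ × ℤ) (θ : ℝ × ℝ) :
    nZ k ^ (s + 1) • vfB s k θ = sin (dotZ k θ) • perpZ k := by
  rcases eq_or_ne k 0 with rfl | hk
  · simp [vfB, perpZ]
  have hpos := Real.rpow_pos_of_pos (nZ_pos hk) (s + 1)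
  rw [vfB, Real.rpow_neg (nZ_pos hk).le, smul_smul, ← mul_assoc, mul_inv_cancel₀ hpos.ne', one_mul]
  rfl

lemma hasFDerivAt_planeWave {f : ℝ → ℝ} {f' : ℝ} (k : ℤ × ℤ) {θ : ℝ × ℝ}
    (hf : HasDerivAt f f' (dotZ k θ)) :
    HasFDerivAt (planeWave f k) ((f' • dotCLM k).smulRight (perpZ k)) θ :=
  (hf.comp_hasFDerivAt θ (dotCLM k).hasFDerivAt).smul_const (perpZ k)

lemma fderiv_planeWave_apply {f : ℝ → ℝ} {f' : ℝ} (k : ℤ × ℤ) {θ : ℝ × ℝ}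
    (hf : HasDerivAt f f' (dotZ k θ)) (w : ℝ × ℝ) :
    fderiv ℝ (planeWave f k) θ w = (f' * dotZ k w) • perpZ k := by
  rw [(hasFDerivAt_planeWave k hf).fderiv]
  rfl

lemma lieB_planeWave {f g : ℝ → ℝ} {f' g' : ℝ} (k l : ℤ × ℤ) {θ : ℝ × ℝ}
    (hf : HasDerivAt f f' (dotZ k θ)) (hg : HasDerivAt g g' (dotZ l θ)) :
    lieB (planeWave f k) (planeWave g l) θ =
      -crossZ k l • ((f (dotZ k θ) * g') • perpZ l + (f' * g (dotZ l θ)) • perpZ k) := by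
  rw [lieB, fderiv_planeWave_apply k hf, fderiv_planeWave_apply l hg, planeWave, planeWave,
    dotZ_smul, dotZ_smul, dotZ_perpZ, dotZ_perpZ, crossZ_comm]
  module

theorem structure_constants_AA_general (s : ℝ) (k l : ℤ × ℤ) :
    ∀ θ : ℝ × ℝ,
      lieB (vfA s k) (vfA s l) θ =
        (crossZ k l / (2 * (nZ k) ^ (s + 1) * (nZ l) ^ (s + 1))) •
          ((nZ (k + l)) ^ (s + 1) • vfB s (k + l) θ + (nZ (k - l)) ^ (s + 1) • vfB s (k - l) θ) := by
  intro θ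
  have hcos (m : ℤ × ℤ) (t : ℝ) :
      HasDerivAt (fun t => nZ m ^ (-(s + 1)) * cos t) (-(nZ m ^ (-(s + 1)) * sin t)) t :=
    ((hasDerivAt_cos t).const_mul (nZ m ^ (-(s + 1)))).congr_deriv (neg_mul_eq_mul_neg _ _).symm
  rw [vfA_eq_planeWave, vfA_eq_planeWave, lieB_planeWave k l (hcos k _) (hcos l _),
    nZ_rpow_smul_vfB, nZ_rpow_smul_vfB, dotZ_add, dotZ_sub, perpZ_add, perpZ_sub, sin_add, sin_sub,
    Real.rpow_neg (nZ_nonneg k), Real.rpow_neg (nZ_nonneg l)]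
  module

theorem structure_constants_AA (s : ℝ) (hs : 0 ≤ s) (k l : ℤ × ℤ)
    (hk : k ≠ 0) (hl : l ≠ 0) (hkl : k + l ≠ 0) (hkl' : k - l ≠ 0) :
    ∀ θ : ℝ × ℝ,
      lieB (vfA s k) (vfA s l) θ =
        (crossZ k l / (2 * (nZ k) ^ (s + 1) * (nZ l) ^ (s + 1))) •
          ((nZ (k + l)) ^ (s + 1) • vfB s (k + l) θ + (nZ (k - l)) ^ (s + 1) • vfB s (k - l) θ) :=
  structure_constants_AA_general s k l
end

section
/- For all k, l ∈ ℤ² \ {0} with k + l ≠ 0 and k − l ≠ 0, there exists a smooth 2π-periodic function p : ℝ² → ℝ such that (B⁰_k·∇A⁰_l)(θ) = [k,l]·(−α⁰_{k,l} A⁰_{k+l}(θ) − β⁰_{k,l} A⁰_{k−l}(θ)) + ∇p(θ) for all θ ∈ ℝ². (Helmholtz decomposition giving the Christoffel symbol Γ⁰_{B_k,A_l} of the L² Levi-Civita connection on the volume-preserving diffeomorphism group of T².) -/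
open Real

/-- Advection `(X·∇Y)(θ) := DY(θ)(X(θ))`. -/
noncomputable def adv (X Y : ℝ × ℝ → ℝ × ℝ) (θ : ℝ × ℝ) : ℝ × ℝ :=
  fderiv ℝ Y θ (X θ)

/-- `α⁰_{k,l} = (|k+l|² - |k|² + |l|²) / (4|k||l||k+l|)`. -/
noncomputable def alpha0 (k l : ℤ × ℤ) : ℝ :=
  ((nZ (k + l)) ^ 2 - (nZ k) ^ 2 + (nZ l) ^ 2) / (4 * (nZ k * nZ l * nZ (k + l)))

/-- `β⁰_{k,l} = (|k-l|² - |k|² + |l|²) / (4|k||l||k-l|)`. -/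
noncomputable def beta0 (k l : ℤ × ℤ) : ℝ :=
  ((nZ (k - l)) ^ 2 - (nZ k) ^ 2 + (nZ l) ^ 2) / (4 * (nZ k * nZ l * nZ (k - l)))

/-- Gradient of a scalar function on `ℝ²`, in coordinates. -/
noncomputable def gradP (p : ℝ × ℝ → ℝ) (θ : ℝ × ℝ) : ℝ × ℝ :=
  (fderiv ℝ p θ (1, 0), fderiv ℝ p θ (0, 1))

/- Auxiliary material -/

lemma nZ_sq (k : ℤ × ℤ) : nZ k ^ 2 = (k.1 : ℝ) ^ 2 + (k.2 : ℝ) ^ 2 :=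
  Real.sq_sqrt (by positivity)

/-- The dot product with `k` as a continuous linear map. -/
noncomputable def dotL (k : ℤ × ℤ) : (ℝ × ℝ) →L[ℝ] ℝ :=
  (k.1 : ℝ) • (ContinuousLinearMap.fst ℝ ℝ ℝ) + (k.2 : ℝ) • (ContinuousLinearMap.snd ℝ ℝ ℝ)

lemma dotL_apply (k : ℤ × ℤ) (v : ℝ × ℝ) : dotL k v = dotZ k v := by
  simp [dotL, dotZ]

lemma hasFDerivAt_dotZ (k : ℤ × ℤ) (θ : ℝ × ℝ) : HasFDerivAt (dotZ k) (dotL k) θ := by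
  have h : dotZ k = ⇑(dotL k) := by
    funext v; rw [dotL_apply]
  rw [h]
  exact (dotL k).hasFDerivAt

lemma contDiff_dotZ (k : ℤ × ℤ) : ContDiff ℝ (⊤ : ℕ∞) (dotZ k) := by
  have h : dotZ k = ⇑(dotL k) := by
    funext v; rw [dotL_apply]
  rw [h]
  exact (dotL k).contDiff

lemma fderiv_vfA_apply (l : ℤ × ℤ) (θ v : ℝ × ℝ) :
    fderiv ℝ (vfA 0 l) θ v =
      ((nZ l) ^ (-(0 + 1) : ℝ) * (-Real.sin (dotZ l θ)) * dotZ l v) • ((l.2 : ℝ), -(l.1 : ℝ)) := by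
  have h1 : HasFDerivAt (fun θ => Real.cos (dotZ l θ)) (-Real.sin (dotZ l θ) • dotL l) θ :=
    (hasFDerivAt_dotZ l θ).cos
  have h2 := h1.const_mul ((nZ l) ^ (-(0 + 1) : ℝ))
  have h3 := h2.smul_const (F := ℝ × ℝ) ((l.2 : ℝ), -(l.1 : ℝ))
  have h4 : HasFDerivAt (vfA 0 l)
      ((((nZ l) ^ (-(0 + 1) : ℝ)) • (-Real.sin (dotZ l θ) • dotL l)).smulRight
        ((l.2 : ℝ), -(l.1 : ℝ))) θ := h3
  rw [h4.fderiv]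
  simp [ContinuousLinearMap.smulRight_apply, dotL_apply, smul_smul]

set_option maxHeartbeats 2000000 in
theorem christoffel_BA (k l : ℤ × ℤ) (hk : k ≠ 0) (hl : l ≠ 0)
    (hkl : k + l ≠ 0) (hkl' : k - l ≠ 0) :
    ∃ p : ℝ × ℝ → ℝ, ContDiff ℝ (⊤ : ℕ∞) p ∧
      (∀ θ : ℝ × ℝ, p (θ.1 + 2 * π, θ.2) = p θ) ∧
      (∀ θ : ℝ × ℝ, p (θ.1, θ.2 + 2 * π) = p θ) ∧
      ∀ θ : ℝ × ℝ,
        adv (vfB 0 k) (vfA 0 l) θ =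
          crossZ k l • ((-(alpha0 k l)) • vfA 0 (k + l) θ + (-(beta0 k l)) • vfA 0 (k - l) θ) + gradP p θ := by
  set C : ℝ := ((k.1 : ℝ) + l.1) ^ 2 + ((k.2 : ℝ) + l.2) ^ 2 with hCdef
  set D : ℝ := ((k.1 : ℝ) - l.1) ^ 2 + ((k.2 : ℝ) - l.2) ^ 2 with hDdef
  have ha := nZ_pos hk
  have hb := nZ_pos hl
  have hc := nZ_pos hkl
  have hd := nZ_pos hkl'
  have hC : nZ (k + l) ^ 2 = C := by
    rw [nZ_sq]; simp [hCdef]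
  have hD : nZ (k - l) ^ 2 = D := by
    rw [nZ_sq]; simp [hDdef]
  have hCpos : 0 < C := hC ▸ (by positivity)
  have hDpos : 0 < D := hD ▸ (by positivity)
  set c₁ : ℝ := -(crossZ k l) ^ 2 / (2 * nZ k * nZ l * C) with hc₁
  set c₂ : ℝ := (crossZ k l) ^ 2 / (2 * nZ k * nZ l * D) with hc₂
  refine ⟨fun θ => c₁ * Real.sin (dotZ (k + l) θ) + c₂ * Real.sin (dotZ (k - l) θ), ?_, ?_, ?_, ?_⟩
  · exact (contDiff_const.mul (Real.contDiff_sin.comp (contDiff_dotZ _))).add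
      (contDiff_const.mul (Real.contDiff_sin.comp (contDiff_dotZ _)))
  · intro θ
    have h1 : ∀ m : ℤ × ℤ, dotZ m (θ.1 + 2 * π, θ.2) = dotZ m θ + (m.1 : ℤ) * (2 * π) := by
      intro m; simp [dotZ]; ring
    simp only [h1, Real.sin_add_int_mul_two_pi]
  · intro θ
    have h1 : ∀ m : ℤ × ℤ, dotZ m (θ.1, θ.2 + 2 * π) = dotZ m θ + (m.2 : ℤ) * (2 * π) := by
      intro m; simp [dotZ]; ring
    simp only [h1, Real.sin_add_int_mul_two_pi]
  · intro θ
    -- derivative of p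
    have hp : ∀ v : ℝ × ℝ,
        fderiv ℝ (fun θ => c₁ * Real.sin (dotZ (k + l) θ) + c₂ * Real.sin (dotZ (k - l) θ)) θ v =
          c₁ * Real.cos (dotZ (k + l) θ) * dotZ (k + l) v +
          c₂ * Real.cos (dotZ (k - l) θ) * dotZ (k - l) v := by
      intro v
      have h1 : HasFDerivAt (fun θ => Real.sin (dotZ (k + l) θ))
          (Real.cos (dotZ (k + l) θ) • dotL (k + l)) θ := (hasFDerivAt_dotZ _ θ).sin
      have h2 : HasFDerivAt (fun θ => Real.sin (dotZ (k - l) θ))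
          (Real.cos (dotZ (k - l) θ) • dotL (k - l)) θ := (hasFDerivAt_dotZ _ θ).sin
      have h := (h1.const_mul c₁).add (h2.const_mul c₂)
      erw [h.fderiv]
      simp [dotL_apply, mul_assoc]
    rw [adv, fderiv_vfA_apply]
    rw [gradP]
    rw [hp (1, 0), hp (0, 1)]
    have hne : nZ k ≠ 0 := (nZ_pos hk).ne'
    have hbe : nZ l ≠ 0 := (nZ_pos hl).ne'
    have hce : nZ (k + l) ≠ 0 := (nZ_pos hkl).ne'
    have hde : nZ (k - l) ≠ 0 := (nZ_pos hkl').ne'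
    have hCne : C ≠ 0 := ne_of_gt hCpos
    have hDne : D ≠ 0 := ne_of_gt hDpos
    have e1 : ∀ x : ℝ, x ^ (-(0 + 1) : ℝ) = x⁻¹ := by
      intro x
      norm_num
      exact Real.rpow_neg_one x
    set A : ℝ := (k.1 : ℝ) ^ 2 + (k.2 : ℝ) ^ 2 with hAdef
    set B : ℝ := (l.1 : ℝ) ^ 2 + (l.2 : ℝ) ^ 2 with hBdef
    have hA2 : nZ k ^ 2 = A := nZ_sq k
    have hB2 : nZ l ^ 2 = B := nZ_sq l
    have hc2 : nZ (k + l) * nZ (k + l) = C := by rw [← hC]; ring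
    have hd2 : nZ (k - l) * nZ (k - l) = D := by rw [← hD]; ring
    have habc : dotZ (k + l) θ = dotZ k θ + dotZ l θ := by simp [dotZ]; push_cast; ring
    have habd : dotZ (k - l) θ = dotZ k θ - dotZ l θ := by simp [dotZ]; push_cast; ring
    have hdotB : dotZ l (vfB 0 k θ) =
        (nZ k)⁻¹ * Real.sin (dotZ k θ) * ((l.1 : ℝ) * k.2 - l.2 * k.1) := by
      simp [vfB, dotZ, e1, Real.rpow_neg_one]
      ring
    have key1 : (-(alpha0 k l)) • vfA 0 (k + l) θ =
        (-((C - A + B) / (4 * (nZ k * nZ l * C))) * Real.cos (dotZ (k + l) θ)) •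
          (((k.2 : ℝ) + l.2), -((k.1 : ℝ) + l.1)) := by
      have hv : ((((k + l).2 : ℤ) : ℝ), -(((k + l).1 : ℤ) : ℝ)) =
          ((((k.2 : ℝ) + l.2)), -((k.1 : ℝ) + l.1)) := by
        simp [Prod.fst_add, Prod.snd_add]
      rw [vfA, hv, smul_smul, alpha0, hC, hA2, hB2, e1]
      congr 1
      rw [← hc2]
      field_simp
    have key2 : (-(beta0 k l)) • vfA 0 (k - l) θ =
        (-((D - A + B) / (4 * (nZ k * nZ l * D))) * Real.cos (dotZ (k - l) θ)) •
          (((k.2 : ℝ) - l.2), -((k.1 : ℝ) - l.1)) := by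
      have hv : ((((k - l).2 : ℤ) : ℝ), -(((k - l).1 : ℤ) : ℝ)) =
          ((((k.2 : ℝ) - l.2)), -((k.1 : ℝ) - l.1)) := by
        simp [Prod.fst_sub, Prod.snd_sub]
      rw [vfA, hv, smul_smul, beta0, hD, hA2, hB2, e1]
      congr 1
      rw [← hd2]
      field_simp
    have hd10 : dotZ (k + l) ((1 : ℝ), (0 : ℝ)) = (k.1 : ℝ) + l.1 := by
      simp [dotZ]
    have hd01 : dotZ (k + l) ((0 : ℝ), (1 : ℝ)) = (k.2 : ℝ) + l.2 := by
      simp [dotZ]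
    have hd10' : dotZ (k - l) ((1 : ℝ), (0 : ℝ)) = (k.1 : ℝ) - l.1 := by
      simp [dotZ]
    have hd01' : dotZ (k - l) ((0 : ℝ), (1 : ℝ)) = (k.2 : ℝ) - l.2 := by
      simp [dotZ]
    rw [hdotB, key1, key2, hd10, hd01, hd10', hd01', habc, habd,
      Real.cos_add, Real.cos_sub, e1]
    set ck := Real.cos (dotZ k θ)
    set sk := Real.sin (dotZ k θ)
    set cl := Real.cos (dotZ l θ)
    set sl := Real.sin (dotZ l θ)
    clear_value ck sk cl sl
    simp only [crossZ, hc₁, hc₂, Prod.smul_mk, smul_eq_mul, Prod.mk_add_mk, Prod.mk.injEq]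
    constructor
    · field_simp
      ring
    · field_simp
      ring
end

section
/- For every real s ≥ 0, every integer N ≥ 1 and every m = (m₁,m₂) ∈ ℤ², the full-lattice truncated sum satisfies ∑_{k ∈ ℤ², 0<|k|≤N} [k,m]²/|k|^{2(s+1)} = |m|² · ∑_{k ∈ ℤ², 0<|k|≤N} k₁²/|k|^{2(s+1)}. (This is the spectral identity producing the exact eigenvalue −ν|m|² of the Laplacian in the stochastic geodesic equation.) -/
open Real

open scoped Classical in
/-- The finite set `{k ∈ ℤ² : 0 < |k| ≤ N}`. -/
noncomputable def ballF (N : ℕ) : Finset (ℤ × ℤ) :=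
  (Finset.Icc (-(N : ℤ), -(N : ℤ)) ((N : ℤ), (N : ℤ))).filter
    (fun k => 0 < nZ k ∧ nZ k ≤ (N : ℝ))

lemma nZ_negsnd (k : ℤ × ℤ) : nZ (k.1, -k.2) = nZ k := by
  simp [nZ]
lemma nZ_swap (k : ℤ × ℤ) : nZ (k.2, k.1) = nZ k := by
  simp [nZ]; ring_nf

lemma mem_negsnd {N : ℕ} {k : ℤ × ℤ} (h : k ∈ ballF N) : (k.1, -k.2) ∈ ballF N := by
  classical
  simp only [ballF, Finset.mem_filter, Finset.mem_Icc, Prod.le_def] at h ⊢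
  refine ⟨?_, ?_⟩
  · omega
  · rw [nZ_negsnd]; exact h.2

lemma mem_swap {N : ℕ} {k : ℤ × ℤ} (h : k ∈ ballF N) : (k.2, k.1) ∈ ballF N := by
  classical
  simp only [ballF, Finset.mem_filter, Finset.mem_Icc, Prod.le_def] at h ⊢
  refine ⟨?_, ?_⟩
  · omega
  · rw [nZ_swap]; exact h.2


theorem spectral_identity (s : ℝ) (hs : 0 ≤ s) (N : ℕ) (hN : 1 ≤ N) (m : ℤ × ℤ) :
    ∑ k ∈ ballF N, (crossZ k m) ^ 2 / (nZ k) ^ (2 * (s + 1))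
      = (nZ m) ^ 2 * ∑ k ∈ ballF N, (k.1 : ℝ) ^ 2 / (nZ k) ^ (2 * (s + 1)) := by
  set w : ℤ × ℤ → ℝ := fun k => (nZ k) ^ (2 * (s + 1)) with hw
  have hwneg : ∀ k : ℤ × ℤ, w (k.1, -k.2) = w k := by
    intro k; simp only [hw, nZ_negsnd]
  have hwswap : ∀ k : ℤ × ℤ, w (k.2, k.1) = w k := by
    intro k; simp only [hw, nZ_swap]
  -- cross term vanishes
  have hS12 : ∑ k ∈ ballF N, ((k.1 : ℝ) * (k.2 : ℝ)) / w k = 0 := by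
    refine Finset.sum_involution (fun a _ => (a.1, -a.2)) ?_ ?_ (fun a ha => mem_negsnd ha) ?_
    · intro a ha
      simp only [hwneg a, Int.cast_neg]
      ring
    · intro a ha hfa
      intro hcon
      apply hfa
      have : a.2 = 0 := by
        have := congrArg Prod.snd hcon
        simp at this
        omega
      simp [this]
    · intro a ha
      simp
  -- k₂² sum equals k₁² sum
  have hS2 : ∑ k ∈ ballF N, ((k.2 : ℝ)) ^ 2 / w k = ∑ k ∈ ballF N, ((k.1 : ℝ)) ^ 2 / w k := by
    refine Finset.sum_nbij' (fun a => (a.2, a.1)) (fun a => (a.2, a.1))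
      (fun a ha => mem_swap ha) (fun a ha => mem_swap ha) (by simp) (by simp) ?_
    intro a ha
    simp only [hwswap a]
  have hnm : (nZ m) ^ 2 = (m.1 : ℝ) ^ 2 + (m.2 : ℝ) ^ 2 := by
    rw [nZ, Real.sq_sqrt (by positivity)]
  have hexp : ∀ k : ℤ × ℤ, (crossZ k m) ^ 2 / w k
      = (m.2 : ℝ) ^ 2 * (((k.1 : ℝ)) ^ 2 / w k) + (m.1 : ℝ) ^ 2 * (((k.2 : ℝ)) ^ 2 / w k)
        - 2 * (m.1 : ℝ) * (m.2 : ℝ) * (((k.1 : ℝ) * (k.2 : ℝ)) / w k) := by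
    intro k
    simp only [crossZ]
    ring
  calc ∑ k ∈ ballF N, (crossZ k m) ^ 2 / w k
      = ∑ k ∈ ballF N, ((m.2 : ℝ) ^ 2 * (((k.1 : ℝ)) ^ 2 / w k)
          + (m.1 : ℝ) ^ 2 * (((k.2 : ℝ)) ^ 2 / w k)
          - 2 * (m.1 : ℝ) * (m.2 : ℝ) * (((k.1 : ℝ) * (k.2 : ℝ)) / w k)) :=
        Finset.sum_congr rfl (fun k _ => hexp k)
    _ = (m.2 : ℝ) ^ 2 * ∑ k ∈ ballF N, ((k.1 : ℝ)) ^ 2 / w k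
          + (m.1 : ℝ) ^ 2 * ∑ k ∈ ballF N, ((k.2 : ℝ)) ^ 2 / w k
          - 2 * (m.1 : ℝ) * (m.2 : ℝ) * ∑ k ∈ ballF N, ((k.1 : ℝ) * (k.2 : ℝ)) / w k := by
        rw [Finset.sum_sub_distrib, Finset.sum_add_distrib, Finset.mul_sum, Finset.mul_sum,
          Finset.mul_sum]
    _ = (nZ m) ^ 2 * ∑ k ∈ ballF N, ((k.1 : ℝ)) ^ 2 / w k := by
        rw [hS12, hS2, hnm]; ring
end
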